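/- There exist n : ℕ and factors f g : (Fin n → Bool) → ℝ≥0 such that for every multiset h : Multiset Bool the images as sets coincide, i.e., Finset.image f (Finset.univ.filter (fun r => hist r = h)) = Finset.image g (Finset.univ.filter (fun r => hist r = h)), yet the multisets of potentials differ for some histogram, and consequently there is no permutation π : Equiv.Perm (Fin n) with f r = g (r ∘ π) for all assignments r. -/

import Mathlib

open scoped NNReal

/-- The histogram of an assignment `r : Fin n → V` is the multiset of its values. -/
def hist {n : ℕ} {V : Type*} (r : Fin n → V) : Multiset V :=
  Multiset.map r Finset.univ.val

/-!
Take three Boolean arguments and the three assignments with histogram `{false, true, true}`.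
The factor `f` singles out one of them and `g` two of them (potential `2`, all other assignments
get `1`). On that histogram `f` takes the potentials `{2, 1, 1}` and `g` the potentials
`{2, 2, 1}`: the same set, different multisets. Permuting argument positions preserves histograms,
so it would preserve these multisets, and no permutation can turn `g` into `f`.
-/

open Finset

lemma hist_comp_perm {n : ℕ} {V : Type*} (r : Fin n → V) (π : Equiv.Perm (Fin n)) :
    hist (r ∘ π) = hist r := by
  rw [hist, hist, ← Multiset.map_map]
  exact congrArg _ (Multiset.map_univ_val_equiv π)

lemma map_filter_hist_eq_of_comp_perm {n : ℕ} {V β : Type*} [Fintype V] [DecidableEq V]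
    {f g : (Fin n → V) → β} {π : Equiv.Perm (Fin n)} (hfg : ∀ r, f r = g (r ∘ π))
    (h : Multiset V) :
    Multiset.map f (univ.filter (fun r : Fin n → V => hist r = h)).val =
      Multiset.map g (univ.filter (fun r : Fin n → V => hist r = h)).val := by
  let e : (Fin n → V) ≃ (Fin n → V) := π.symm.arrowCongr (Equiv.refl V)
  have e_apply : ∀ r, e r = r ∘ π := fun r => rfl
  have fiber_map : (univ.filter (fun r : Fin n → V => hist r = h)).map e.toEmbedding =
      univ.filter (fun r : Fin n → V => hist r = h) := by
    conv_rhs => rw [← map_univ_equiv e, filter_map]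
    congr 1
    exact filter_congr fun r _ => by
      rw [Function.comp_apply, Equiv.coe_toEmbedding, e_apply, hist_comp_perm]
  set fiber := univ.filter (fun r : Fin n → V => hist r = h)
  calc Multiset.map f fiber.val = Multiset.map (g ∘ e) fiber.val :=
        Multiset.map_congr rfl fun r _ => hfg r
    _ = Multiset.map g (fiber.map e.toEmbedding).val := by rw [map_val, Multiset.map_map]; rfl
    _ = Multiset.map g fiber.val := by rw [fiber_map]

def markOne (r : Fin 3 → Bool) : Bool :=
  decide (r = ![false, true, true])

def markTwo (r : Fin 3 → Bool) : Bool :=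
  decide (r = ![true, false, true]) || decide (r = ![true, true, false])

lemma image_markOne_filter_hist_eq (h : Multiset Bool) :
    (univ.filter (fun r : Fin 3 → Bool => hist r = h)).image markOne =
      (univ.filter (fun r : Fin 3 → Bool => hist r = h)).image markTwo := by
  rcases (univ.filter (fun r : Fin 3 → Bool => hist r = h)).eq_empty_or_nonempty with
    hempty | ⟨r, hr⟩
  · rw [hempty, image_empty, image_empty]
  · obtain rfl := (mem_filter.1 hr).2
    clear hr
    revert r
    decide

lemma map_markOne_filter_hist_ne :
    Multiset.map markOne
        (univ.filter (fun r : Fin 3 → Bool => hist r = hist ![false, true, true])).val ≠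
      Multiset.map markTwo
        (univ.filter (fun r : Fin 3 → Bool => hist r = hist ![false, true, true])).val := by
  decide

def potential (b : Bool) : ℝ≥0 :=
  if b then 2 else 1

lemma potential_injective : Function.Injective potential := by
  intro a b hab
  cases a <;> cases b <;> simp_all [potential]

lemma exists_map_filter_hist_ne :
    ∃ h : Multiset Bool,
      Multiset.map (potential ∘ markOne)
          (univ.filter (fun r : Fin 3 → Bool => hist r = h)).val ≠
        Multiset.map (potential ∘ markTwo)
          (univ.filter (fun r : Fin 3 → Bool => hist r = h)).val := by
  refine ⟨hist ![false, true, true], fun heq => map_markOne_filter_hist_ne ?_⟩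
  rw [← Multiset.map_map, ← Multiset.map_map] at heq
  exact Multiset.map_injective potential_injective heq

/-- There exist two Boolean factors whose *sets* of potentials coincide for every histogram,
while the *multisets* of potentials differ for some histogram; consequently no permutation of
argument positions makes the two factors equal. This shows multisets, not sets, of potentials
must be compared for each histogram. -/
theorem stmt_8 :
    ∃ (n : ℕ) (f g : (Fin n → Bool) → ℝ≥0),
      (∀ h : Multiset Bool,
        Finset.image f (Finset.univ.filter (fun r : Fin n → Bool => hist r = h)) =
        Finset.image g (Finset.univ.filter (fun r : Fin n → Bool => hist r = h))) ∧
      (∃ h : Multiset Bool,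
        Multiset.map f
          ((Finset.univ.filter (fun r : Fin n → Bool => hist r = h)).val) ≠
        Multiset.map g
          ((Finset.univ.filter (fun r : Fin n → Bool => hist r = h)).val)) ∧
      ¬ ∃ π : Equiv.Perm (Fin n), ∀ r : Fin n → Bool, f r = g (r ∘ π) := by
  refine ⟨3, potential ∘ markOne, potential ∘ markTwo, fun h => ?_,
    exists_map_filter_hist_ne, ?_⟩
  · rw [← image_image, ← image_image, image_markOne_filter_hist_eq]
  · rintro ⟨π, hπ⟩
    obtain ⟨h, hne⟩ := exists_map_filter_hist_ne
    exact hne (map_filter_hist_eq_of_comp_perm hπ h)
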